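/- Let σ : ℝ → ℝ be three times continuously differentiable with bounded third derivative, let R > 0 and a > 0, and let t ∈ ℝ satisfy σ''(t) ≠ 0. Define f_sq(x) = (R² / σ''(t)) · (σ(2x/R + t) − 2·σ(x/R + t) + σ(t)). Then for every x ∈ [−a, a] one has |f_sq(x) − x²| ≤ (5 · ‖σ'''‖_∞ · a³) / (3 · |σ''(t)|) · (1/R). -/

import Mathlib

/-!
With `c = σ''(t)` and `h = x / R`, the network is `R² / c` times the second difference
`σ(t + 2h) - 2σ(t + h) + σ(t)`. Expanding `σ` around `t` to second order with Lagrange remainder,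
the constant and linear terms cancel in this difference and the quadratic ones leave `c h²`,
while the two remainders contribute at most `(8 + 2) / 6 · ‖σ'''‖_∞ |h|³`. Multiplying by
`R² / |c|` gives the error `5 ‖σ'''‖_∞ |x|³ / (3 |c| R)`.
-/

open Real Set

/-- Supremum norm of a function `g : ℝ → ℝ`. -/
noncomputable def supNorm (g : ℝ → ℝ) : ℝ := ⨆ x : ℝ, |g x|

open Nat in
theorem taylorWithinEval_uIcc_eq_sum {f : ℝ → ℝ} {n : ℕ} (hf : ContDiff ℝ n f) {x₀ x : ℝ}
    (hx : x₀ ≠ x) :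
    taylorWithinEval f n (uIcc x₀ x) x₀ x =
      ∑ k ∈ Finset.range (n + 1), iteratedDeriv k f x₀ * (x - x₀) ^ k / k ! := by
  rw [taylor_within_apply]
  refine Finset.sum_congr rfl fun k hk => ?_
  rw [iteratedDerivWithin_eq_iteratedDeriv (uniqueDiffOn_uIcc hx)
    (hf.contDiffAt.of_le (by exact_mod_cast Finset.mem_range_succ_iff.mp hk)) left_mem_uIcc,
    smul_eq_mul]
  ring

open Nat in
theorem abs_sub_taylor_le {f : ℝ → ℝ} {n : ℕ} {M : ℝ} (hf : ContDiff ℝ (n + 1) f)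
    (hM : ∀ y, |iteratedDeriv (n + 1) f y| ≤ M) (x₀ x : ℝ) :
    |f x - ∑ k ∈ Finset.range (n + 1), iteratedDeriv k f x₀ * (x - x₀) ^ k / k !| ≤
      M * |x - x₀| ^ (n + 1) / (n + 1)! := by
  rcases eq_or_ne x₀ x with rfl | hx
  · simp [Finset.sum_range_succ']
  obtain ⟨y, -, hy⟩ := taylor_mean_remainder_lagrange_iteratedDeriv hx hf.contDiffOn
  rw [← taylorWithinEval_uIcc_eq_sum (hf.of_le (by norm_cast; omega)) hx, hy, abs_div, abs_mul,
    abs_pow, Nat.abs_cast]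
  gcongr
  exact hM y

theorem abs_second_difference_sub_le {σ : ℝ → ℝ} {M : ℝ} (hσ : ContDiff ℝ 3 σ)
    (hM : ∀ y, |deriv (deriv (deriv σ)) y| ≤ M) (t h : ℝ) :
    |σ (t + 2 * h) - 2 * σ (t + h) + σ t - deriv (deriv σ) t * h ^ 2| ≤ 5 / 3 * M * |h| ^ 3 := by
  have hTaylor : ∀ s, |σ (t + s) - (σ t + deriv σ t * s + deriv (deriv σ) t * s ^ 2 / 2)| ≤
      M * |s| ^ 3 / 6 := by
    intro s
    have := abs_sub_taylor_le (n := 2) hσ (by simpa [iteratedDeriv_succ] using hM) t (t + s)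
    simpa [Finset.sum_range_succ, iteratedDeriv_succ, Nat.factorial] using this
  have h2 := hTaylor (2 * h)
  have h1 := hTaylor h
  rw [abs_mul, abs_two] at h2
  calc |σ (t + 2 * h) - 2 * σ (t + h) + σ t - deriv (deriv σ) t * h ^ 2|
      = |(σ (t + 2 * h) - (σ t + deriv σ t * (2 * h) + deriv (deriv σ) t * (2 * h) ^ 2 / 2)) -
          2 * (σ (t + h) - (σ t + deriv σ t * h + deriv (deriv σ) t * h ^ 2 / 2))| := by
        congr 1; ring
    _ ≤ M * (2 * |h|) ^ 3 / 6 + 2 * (M * |h| ^ 3 / 6) := by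
        refine (abs_sub _ _).trans (add_le_add h2 ?_)
        rw [abs_mul, abs_two]
        linarith
    _ = 5 / 3 * M * |h| ^ 3 := by ring

theorem abs_le_supNorm {g : ℝ → ℝ} (hg : BddAbove (range fun x => |g x|)) (x : ℝ) :
    |g x| ≤ supNorm g :=
  le_ciSup hg x

theorem square_network_approx_general (σ : ℝ → ℝ) (hσ : ContDiff ℝ 3 σ)
    (hbd : ∃ B : ℝ, ∀ x : ℝ, |deriv (deriv (deriv σ)) x| ≤ B)
    (R a t : ℝ) (hR : 0 < R) (ht : deriv (deriv σ) t ≠ 0)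
    (f_sq : ℝ → ℝ)
    (hfsq : ∀ x : ℝ, f_sq x =
      (R ^ 2 / deriv (deriv σ) t) * (σ (2 * x / R + t) - 2 * σ (x / R + t) + σ t)) :
    ∀ x ∈ Set.Icc (-a) a,
      |f_sq x - x ^ 2| ≤
        (5 * supNorm (deriv (deriv (deriv σ))) * a ^ 3) / (3 * |deriv (deriv σ) t|) * (1 / R) := by
  intro x hx
  obtain ⟨B, hB⟩ := hbd
  set M := supNorm (deriv (deriv (deriv σ)))
  set c := deriv (deriv σ) t
  have hM : ∀ y, |deriv (deriv (deriv σ)) y| ≤ M :=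
    abs_le_supNorm ⟨B, by rintro _ ⟨y, rfl⟩; exact hB y⟩
  have hM0 : 0 ≤ M := (abs_nonneg _).trans (hM 0)
  have hfsq_sub : f_sq x - x ^ 2 =
      R ^ 2 / c * (σ (t + 2 * (x / R)) - 2 * σ (t + x / R) + σ t - c * (x / R) ^ 2) := by
    rw [hfsq, add_comm t, add_comm t, mul_div_assoc]
    field_simp
  calc |f_sq x - x ^ 2|
      = R ^ 2 / |c| * |σ (t + 2 * (x / R)) - 2 * σ (t + x / R) + σ t - c * (x / R) ^ 2| := by
        rw [hfsq_sub, abs_mul, abs_div, abs_pow, abs_of_pos hR]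
    _ ≤ R ^ 2 / |c| * (5 / 3 * M * |x / R| ^ 3) := by
        gcongr
        exact abs_second_difference_sub_le hσ hM t (x / R)
    _ = 5 * M * |x| ^ 3 / (3 * |c|) * (1 / R) := by
        rw [abs_div, abs_of_pos hR]
        field_simp
    _ ≤ 5 * M * a ^ 3 / (3 * |c|) * (1 / R) := by
        gcongr
        exact abs_le.mpr hx

/-- approximation of the square function by a shallow network. -/
theorem square_network_approx (σ : ℝ → ℝ) (hσ : ContDiff ℝ 3 σ)
    (hbd : ∃ B : ℝ, ∀ x : ℝ, |deriv (deriv (deriv σ)) x| ≤ B)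
    (R a t : ℝ) (hR : 0 < R) (ha : 0 < a) (ht : deriv (deriv σ) t ≠ 0)
    (f_sq : ℝ → ℝ)
    (hfsq : ∀ x : ℝ, f_sq x =
      (R ^ 2 / deriv (deriv σ) t) * (σ (2 * x / R + t) - 2 * σ (x / R + t) + σ t)) :
    ∀ x ∈ Set.Icc (-a) a,
      |f_sq x - x ^ 2| ≤
        (5 * supNorm (deriv (deriv (deriv σ))) * a ^ 3) / (3 * |deriv (deriv σ) t|) * (1 / R) :=
  square_network_approx_general σ hσ hbd R a t hR ht f_sq hfsq
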